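/- Let I ⊊ J ⊆ S be monomial complete intersection ideals. Then sdepth_S(J/I) ≥ depth_S(J/I); i.e., the Stanley conjecture holds for quotients of complete intersection monomial ideals. -/

import Mathlib

/- Combinatorial formalization of Stanley depth for quotients `J/I` of monomial
ideals in `S = K[x_1,...,x_n]`: monomials are identified with their exponent
vectors in `Fin n → ℕ`, the `ℤⁿ`-graded module `J/I` is identified with the set
of exponent vectors of monomials in `J \ I`, and a Stanley decomposition
`⊕ uᵢ K[Zᵢ]` is identified with a partition of this set into "intervals"
`{b | aᵢ ≤ b ∧ (b = aᵢ outside Zᵢ)}` (the exponent set of `x^{aᵢ} K[Zᵢ]`).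
This correspondence is exact and the resulting Stanley depth is independent of
the field `K`. `sdepthOn V M` is the Stanley depth of `M` as a module over the
polynomial subring on the variables in `V` (e.g. `S' = K[x_2,...,x_n]`). -/

/-- The set of exponent vectors of the Stanley space `x^a · K[Z]`. -/
def SInterval {n : ℕ} (a : Fin n → ℕ) (Z : Finset (Fin n)) : Set (Fin n → ℕ) :=
  {b | a ≤ b ∧ ∀ i ∉ Z, b i = a i}

/-- A (combinatorial) Stanley decomposition of the set `M` of exponent vectors,
using only variables from `V`. -/
def IsStanleyDecompOn {n : ℕ} (V : Finset (Fin n)) (M : Set (Fin n → ℕ)) {r : ℕ}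
    (a : Fin r → Fin n → ℕ) (Z : Fin r → Finset (Fin n)) : Prop :=
  (∀ i, Z i ⊆ V) ∧ (∀ i, SInterval (a i) (Z i) ⊆ M) ∧
    (∀ x ∈ M, ∃ i, x ∈ SInterval (a i) (Z i)) ∧
    ∀ i j, i ≠ j → Disjoint (SInterval (a i) (Z i)) (SInterval (a j) (Z j))

/-- The Stanley depth of `M`, viewed over the polynomial ring on the variables in `V`. -/
noncomputable def sdepthOn {n : ℕ} (V : Finset (Fin n)) (M : Set (Fin n → ℕ)) : ℕ :=
  sSup {d | ∃ (r : ℕ), 0 < r ∧ ∃ (a : Fin r → Fin n → ℕ) (Z : Fin r → Finset (Fin n)),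
    IsStanleyDecompOn V M a Z ∧ ∀ i, d ≤ (Z i).card}

/-- The Stanley depth over the full polynomial ring `S = K[x_1,...,x_n]`. -/
noncomputable def sdepth {n : ℕ} (M : Set (Fin n → ℕ)) : ℕ := sdepthOn Finset.univ M

/-- Exponent vectors of the monomial ideal generated by the monomials `x^a`, `a ∈ A`. -/
def upSet {n : ℕ} (A : Set (Fin n → ℕ)) : Set (Fin n → ℕ) := {c | ∃ a ∈ A, a ≤ c}

/-- `M` is the set of exponent vectors of the monomials of a monomial ideal. -/
def IsMonomialIdealSet {n : ℕ} (M : Set (Fin n → ℕ)) : Prop :=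
  ∀ a ∈ M, ∀ b, a ≤ b → b ∈ M

/-- All monomials of `M` only involve the variables in `V`. -/
def SupportedOn {n : ℕ} (V : Finset (Fin n)) (M : Set (Fin n → ℕ)) : Prop :=
  ∀ c ∈ M, ∀ i ∉ V, c i = 0

/-- The support of a monomial. -/
def msupp {n : ℕ} (u : Fin n → ℕ) : Finset (Fin n) :=
  Finset.univ.filter fun i => u i ≠ 0

/-- A regular sequence of monomials: monic nonunit monomials with pairwise
disjoint supports. -/
def IsRegSeqM {n m : ℕ} (u : Fin m → Fin n → ℕ) : Prop :=
  (∀ j, u j ≠ 0) ∧ ∀ j k, j ≠ k → Disjoint (msupp (u j)) (msupp (u k))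

/-!
Reorder the `u j` so that `u k ∣ v k` for `k < p`; this is possible because the `v k` have
disjoint supports. Sorting a monomial `c ∈ J \ I` by the first `u j` dividing it splits `J \ I`
into the sets of monomials divisible by `u j` and by none of the `u j'` (`j' < j`) and `v k`
(`k ≥ j`): at most `max j p` generators to avoid, hence at most `q - 1` when `p < q`.
A set `{c | g ≤ c, w ∤ c for w ∈ W}` has a Stanley decomposition into spaces of dimension
`≥ n - |W|`: the space through `c` freezes, for each `w ∈ W`, the first coordinate at which `c`
falls below `w`, and lets the other coordinates grow above the bounds that keep these coordinates
the first gaps.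
-/

open Finset Function

namespace MonomialCI

variable {n : ℕ}

def HasStanleyDecompOn (V : Finset (Fin n)) (M : Set (Fin n → ℕ)) (d : ℕ) : Prop :=
  ∃ F : Finset ((Fin n → ℕ) × Finset (Fin n)),
    (∀ x ∈ F, x.2 ⊆ V ∧ d ≤ x.2.card ∧ SInterval x.1 x.2 ⊆ M) ∧
    (∀ c ∈ M, ∃ x ∈ F, c ∈ SInterval x.1 x.2) ∧
    (F : Set ((Fin n → ℕ) × Finset (Fin n))).PairwiseDisjoint fun x => SInterval x.1 x.2

namespace HasStanleyDecompOn

variable {V : Finset (Fin n)} {M : Set (Fin n → ℕ)} {d : ℕ}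

lemma mono {d' : ℕ} (h : HasStanleyDecompOn V M d) (hd : d' ≤ d) :
    HasStanleyDecompOn V M d' := by
  obtain ⟨F, hF, hcover, hdisj⟩ := h
  exact ⟨F, fun x hx => ⟨(hF x hx).1, hd.trans (hF x hx).2.1, (hF x hx).2.2⟩, hcover, hdisj⟩

lemma le_sdepthOn (h : HasStanleyDecompOn V M d) (hM : M.Nonempty) : d ≤ sdepthOn V M := by
  obtain ⟨F, hF, hcover, hdisj⟩ := h
  obtain ⟨c, hc⟩ := hM
  have hr : 0 < F.card := card_pos.mpr (let ⟨x, hx, _⟩ := hcover c hc; ⟨x, hx⟩)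
  let x : Fin F.card ≃ F := F.equivFin.symm
  refine le_csSup ⟨n, ?_⟩
    ⟨F.card, hr, fun i => (x i).1.1, fun i => (x i).1.2, ⟨?_, ?_, ?_, ?_⟩, ?_⟩
  · rintro d ⟨r, hr, a, Z, -, hd⟩
    exact (hd ⟨0, hr⟩).trans ((card_le_univ _).trans_eq (Fintype.card_fin n))
  · exact fun i => (hF _ (x i).2).1
  · exact fun i => (hF _ (x i).2).2.2
  · intro c hc
    obtain ⟨y, hy, hcy⟩ := hcover c hc
    exact ⟨F.equivFin ⟨y, hy⟩, by simpa [x] using hcy⟩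
  · exact fun i j hij => hdisj (x i).2 (x j).2 fun h => hij (x.injective (Subtype.ext h))
  · exact fun i => (hF _ (x i).2).2.1

/-- The distinct values of a key `c ↦ (a c, Z c)` that is constant on each of its intervals
index a partition of `M`. -/
lemma of_key (a : (Fin n → ℕ) → Fin n → ℕ) (Z : (Fin n → ℕ) → Finset (Fin n))
    (ha : BddAbove (a '' M)) (hZ : ∀ c ∈ M, Z c ⊆ V ∧ d ≤ (Z c).card)
    (hself : ∀ c ∈ M, c ∈ SInterval (a c) (Z c))
    (hstable : ∀ c ∈ M, ∀ b ∈ SInterval (a c) (Z c), b ∈ M ∧ a b = a c ∧ Z b = Z c) :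
    HasStanleyDecompOn V M d := by
  have hfin : ((fun c => (a c, Z c)) '' M).Finite :=
    (ha.finite.prod Set.finite_univ).subset
      (by rintro _ ⟨c, hc, rfl⟩; exact ⟨⟨c, hc, rfl⟩, trivial⟩)
  refine ⟨hfin.toFinset, ?_, fun c hc => ⟨_, hfin.mem_toFinset.mpr ⟨c, hc, rfl⟩, hself c hc⟩, ?_⟩
  · simp only [Set.Finite.mem_toFinset]
    rintro _ ⟨c, hc, rfl⟩
    exact ⟨(hZ c hc).1, (hZ c hc).2, fun b hb => (hstable c hc b hb).1⟩
  · simp only [Set.Finite.coe_toFinset]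
    rintro _ ⟨c, hc, rfl⟩ _ ⟨c', hc', rfl⟩ hne
    refine Set.disjoint_left.mpr fun b hb hb' => hne ?_
    obtain ⟨-, hab, hZb⟩ := hstable c hc b hb
    obtain ⟨-, hab', hZb'⟩ := hstable c' hc' b hb'
    exact Prod.ext (hab.symm.trans hab') (hZb.symm.trans hZb')

lemma iUnion {ι : Type*} [Fintype ι] {M : ι → Set (Fin n → ℕ)}
    (hdisj : Pairwise (Disjoint on M)) (h : ∀ j, HasStanleyDecompOn V (M j) d) :
    HasStanleyDecompOn V (⋃ j, M j) d := by
  choose F hF hcover hdisjF using h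
  refine ⟨univ.biUnion F, ?_, ?_, ?_⟩
  · simp only [mem_biUnion, mem_univ, true_and]
    rintro x ⟨j, hx⟩
    obtain ⟨hV, hd, hM⟩ := hF j x hx
    exact ⟨hV, hd, hM.trans (Set.subset_iUnion M j)⟩
  · simp only [Set.mem_iUnion, mem_biUnion, mem_univ, true_and]
    rintro c ⟨j, hc⟩
    obtain ⟨x, hx, hcx⟩ := hcover j c hc
    exact ⟨x, ⟨j, hx⟩, hcx⟩
  · simp only [coe_biUnion, coe_univ, Set.mem_univ, Set.iUnion_true]
    intro x hx y hy hxy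
    obtain ⟨j, hx⟩ := Set.mem_iUnion.mp hx
    obtain ⟨j', hy⟩ := Set.mem_iUnion.mp hy
    by_cases hjj : j = j'
    · subst hjj
      exact hdisjF j hx hy hxy
    · exact (hdisj hjj).mono (hF j x hx).2.2 (hF j' y hy).2.2

end HasStanleyDecompOn

def gap (w c : Fin n → ℕ) : WithTop (Fin n) :=
  (univ.filter fun i => c i < w i).min

variable {w c b : Fin n → ℕ} {i : Fin n}

lemma coe_lt_gap_iff : (i : WithTop (Fin n)) < gap w c ↔ ∀ i' ≤ i, w i' ≤ c i' := by
  rw [gap, Finset.min, Finset.lt_inf_iff (WithTop.coe_lt_top i)]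
  simp only [mem_filter, mem_univ, true_and, WithTop.coe_lt_coe]
  exact ⟨fun h i' hi' => not_lt.mp fun hlt => (h i' hlt).not_ge hi',
    fun h i' hlt => not_le.mp fun hle => (h i' hle).not_gt hlt⟩

lemma gap_eq_coe_iff : gap w c = i ↔ c i < w i ∧ ∀ i' < i, w i' ≤ c i' := by
  constructor
  · intro h
    refine ⟨by simpa using mem_of_min h, fun i' hi' => not_lt.mp fun hlt => ?_⟩
    exact (min_le_of_eq (by simpa using hlt) h).not_gt hi'
  · rintro ⟨hlt, hle⟩
    refine le_antisymm (min_le (mem_filter.mpr ⟨mem_univ _, hlt⟩)) (Finset.le_min fun i' hi' => ?_)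
    exact WithTop.coe_le_coe.mpr (not_lt.mp fun h => (hle i' h).not_gt (by simpa using hi'))

lemma exists_gap_eq_coe (h : ¬ w ≤ c) : ∃ i : Fin n, gap w c = i := by
  obtain ⟨i, hi⟩ := not_forall.mp h
  exact min_of_nonempty (s := univ.filter fun i => c i < w i) ⟨i, by simpa using hi⟩

lemma mem_upSet_range {m : ℕ} {u : Fin m → Fin n → ℕ} :
    c ∈ upSet (Set.range u) ↔ ∃ j, u j ≤ c := by
  simp [upSet]

section AvoidSet

variable (g : Fin n → ℕ) (W : Finset (Fin n → ℕ))

def avoidSet : Set (Fin n → ℕ) := {c | g ≤ c ∧ ∀ w ∈ W, ¬ w ≤ c}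

def gapSet (c : Fin n → ℕ) : Finset (Fin n) :=
  univ.filter fun i => ∃ w ∈ W, gap w c = i

/-- The corner of the Stanley interval of `c ∈ avoidSet g W`: the gap coordinates of `c` are
frozen, every other coordinate is only bounded below, by `g` and by those `w ∈ W` whose first
gap lies further right (so that this gap stays the first one). -/
def avoidCorner (c : Fin n → ℕ) : Fin n → ℕ := fun i =>
  if i ∈ gapSet W c then c i
  else max (g i) (W.sup fun w => if (i : WithTop (Fin n)) < gap w c then w i else 0)

variable {g W}

lemma card_gapSet_le : (gapSet W c).card ≤ W.card := by
  refine (card_le_card_of_injOn ((↑) : Fin n → WithTop (Fin n)) (t := W.image (gap · c))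
    ?_ WithTop.coe_injective.injOn).trans card_image_le
  intro i hi
  obtain ⟨w, hw, h⟩ := (mem_filter.mp hi).2
  exact mem_image.mpr ⟨w, hw, h⟩

lemma avoidCorner_le_self (hgc : g ≤ c) : avoidCorner g W c ≤ c := by
  intro i
  unfold avoidCorner
  split_ifs
  · exact le_rfl
  · refine max_le (hgc i) (Finset.sup_le fun w _ => ?_)
    split_ifs with h
    · exact coe_lt_gap_iff.mp h i le_rfl
    · exact Nat.zero_le _

lemma avoidCorner_le_sup : avoidCorner g W c ≤ g ⊔ W.sup id := by
  intro i
  unfold avoidCorner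
  split_ifs with h
  · obtain ⟨w, hw, hgap⟩ := (mem_filter.mp h).2
    exact (gap_eq_coe_iff.mp hgap).1.le.trans ((le_sup (f := id) hw).trans le_sup_right i)
  · refine max_le (le_sup_left (b := W.sup id) i) (Finset.sup_le fun w hw => ?_)
    split_ifs
    · exact (le_sup (f := id) hw).trans le_sup_right i
    · exact Nat.zero_le _

lemma mem_sInterval_avoidCorner (hgc : g ≤ c) :
    c ∈ SInterval (avoidCorner g W c) (gapSet W c)ᶜ :=
  ⟨avoidCorner_le_self hgc, fun i hi => by
    rw [avoidCorner, if_pos (by simpa using hi)]⟩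

lemma eq_of_mem_gapSet (hb : b ∈ SInterval (avoidCorner g W c) (gapSet W c)ᶜ)
    (hi : i ∈ gapSet W c) : b i = c i := by
  simpa [avoidCorner, hi] using hb.2 i (by simpa using hi)

lemma gap_eq_of_mem_sInterval (hb : b ∈ SInterval (avoidCorner g W c) (gapSet W c)ᶜ)
    (hc : c ∈ avoidSet g W) (hw : w ∈ W) : gap w b = gap w c := by
  obtain ⟨i, hi⟩ := exists_gap_eq_coe (hc.2 w hw)
  obtain ⟨hlt, hle⟩ := gap_eq_coe_iff.mp hi
  rw [hi, gap_eq_coe_iff]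
  refine ⟨eq_of_mem_gapSet hb (mem_filter.mpr ⟨mem_univ _, w, hw, hi⟩) ▸ hlt, fun i' hi' => ?_⟩
  by_cases h' : i' ∈ gapSet W c
  · rw [eq_of_mem_gapSet hb h']
    exact hle i' hi'
  · have hlt' : (i' : WithTop (Fin n)) < gap w c := hi ▸ WithTop.coe_lt_coe.mpr hi'
    calc w i' = if (i' : WithTop (Fin n)) < gap w c then w i' else 0 := (if_pos hlt').symm
      _ ≤ W.sup fun w => if (i' : WithTop (Fin n)) < gap w c then w i' else 0 :=
          le_sup (f := fun w => if (i' : WithTop (Fin n)) < gap w c then w i' else 0) hw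
      _ ≤ avoidCorner g W c i' := by rw [avoidCorner, if_neg h']; exact le_max_right _ _
      _ ≤ b i' := hb.1 i'

lemma avoidCorner_stable (hb : b ∈ SInterval (avoidCorner g W c) (gapSet W c)ᶜ)
    (hc : c ∈ avoidSet g W) :
    b ∈ avoidSet g W ∧ avoidCorner g W b = avoidCorner g W c ∧ gapSet W b = gapSet W c := by
  have hgap := fun w (hw : w ∈ W) => gap_eq_of_mem_sInterval hb hc hw
  have hgapSet : gapSet W b = gapSet W c := by
    ext i
    simp only [gapSet, mem_filter, mem_univ, true_and]
    exact ⟨fun ⟨w, hw, h⟩ => ⟨w, hw, hgap w hw ▸ h⟩, fun ⟨w, hw, h⟩ => ⟨w, hw, hgap w hw ▸ h⟩⟩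
  refine ⟨⟨fun i => ?_, fun w hw hwb => ?_⟩, funext fun i => ?_, hgapSet⟩
  · by_cases h : i ∈ gapSet W c
    · exact eq_of_mem_gapSet hb h ▸ hc.1 i
    · exact (le_max_left _ _).trans ((if_neg h).symm.trans_le (hb.1 i))
  · obtain ⟨i, hi⟩ := exists_gap_eq_coe (hc.2 w hw)
    exact (hwb i).not_gt (gap_eq_coe_iff.mp ((hgap w hw).trans hi)).1
  · unfold avoidCorner
    rw [hgapSet]
    split_ifs with h
    · exact eq_of_mem_gapSet hb h
    · rw [Finset.sup_congr rfl fun w hw => by rw [hgap w hw]]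

theorem hasStanleyDecompOn_avoidSet : HasStanleyDecompOn univ (avoidSet g W) (n - W.card) :=
  .of_key (avoidCorner g W) (fun c => (gapSet W c)ᶜ)
    ⟨g ⊔ W.sup id, by rintro _ ⟨c, -, rfl⟩; exact avoidCorner_le_sup⟩
    (fun c _ => ⟨subset_univ _, by
      rw [card_compl, Fintype.card_fin]; exact Nat.sub_le_sub_left card_gapSet_le n⟩)
    (fun c hc => mem_sInterval_avoidCorner hc.1)
    (fun c hc b hb => by
      obtain ⟨hbM, hcorner, hgapSet⟩ := avoidCorner_stable hb hc
      exact ⟨hbM, hcorner, by rw [hgapSet]⟩)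

end AvoidSet

section Layers

variable {p q : ℕ} (u : Fin q → Fin n → ℕ) (v : Fin p → Fin n → ℕ)

/-- The generators to be avoided by the monomials of `J \ I` whose first divisor among the
`u j'` is `u j`; the `v k` with `k < j` need not be listed when `u k ∣ v k`. -/
def obstructions (j : Fin q) : Finset (Fin n → ℕ) :=
  (univ.filter fun j' => j' < j).image u ∪ (univ.filter fun k : Fin p => (j : ℕ) ≤ k).image v

lemma card_obstructions_le (j : Fin q) : (obstructions u v j).card ≤ max (j : ℕ) p := by
  have hu : (univ.filter fun j' : Fin q => j' < j).card ≤ j :=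
    (card_le_card_of_injOn Fin.val (t := range j) (fun j' hj' => by simpa using hj')
      Fin.val_injective.injOn).trans_eq (card_range _)
  have hv : (univ.filter fun k : Fin p => (j : ℕ) ≤ k).card ≤ p - j :=
    (card_le_card_of_injOn Fin.val (t := Ico (j : ℕ) p) (fun k hk => by simpa using hk)
      Fin.val_injective.injOn).trans_eq (Nat.card_Ico _ _)
  calc (obstructions u v j).card ≤ j + (p - j) :=
        (card_union_le _ _).trans (add_le_add (card_image_le.trans hu) (card_image_le.trans hv))
    _ ≤ max (j : ℕ) p := by omega

variable {u v}

lemma upSet_diff_eq_iUnion (hpq : p ≤ q) (hdom : ∀ k, u (Fin.castLE hpq k) ≤ v k) :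
    upSet (Set.range u) \ upSet (Set.range v) = ⋃ j, avoidSet (u j) (obstructions u v j) := by
  ext c
  simp only [Set.mem_sdiff, mem_upSet_range, not_exists, Set.mem_iUnion]
  constructor
  · rintro ⟨hu, hv⟩
    obtain ⟨j, hj, hmin⟩ := wellFounded_lt.has_min {j | u j ≤ c} hu
    refine ⟨j, hj, fun w hw => ?_⟩
    rcases mem_union.mp hw with hw | hw
    · obtain ⟨j', hj', rfl⟩ := mem_image.mp hw
      exact fun h => hmin j' h (by simpa using hj')
    · obtain ⟨k, -, rfl⟩ := mem_image.mp hw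
      exact hv k
  · rintro ⟨j, hj, hW⟩
    refine ⟨⟨j, hj⟩, fun k hk => ?_⟩
    by_cases hjk : (j : ℕ) ≤ k
    · exact hW _ (mem_union_right _ (mem_image_of_mem _ (by simpa using hjk))) hk
    · have hkj : Fin.castLE hpq k ∈ univ.filter (· < j) :=
        mem_filter.mpr ⟨mem_univ _, Fin.lt_def.mpr (not_le.mp hjk)⟩
      exact hW _ (mem_union_left _ (mem_image_of_mem _ hkj)) ((hdom k).trans hk)

lemma pairwise_disjoint_avoidSet :
    Pairwise (Disjoint on fun j => avoidSet (u j) (obstructions u v j)) := by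
  intro j j' hne
  wlog h : j < j' generalizing j j'
  · exact (this hne.symm (lt_of_le_of_ne (not_lt.mp h) hne.symm)).symm
  exact Set.disjoint_left.mpr fun c hc hc' =>
    hc'.2 (u j) (mem_union_left _ (mem_image_of_mem _ (by simpa using h))) hc.1

theorem le_sdepth_upSet_diff (hpq : p ≤ q) (hqn : q ≤ n)
    (hdom : ∀ k, u (Fin.castLE hpq k) ≤ v k)
    (hM : (upSet (Set.range u) \ upSet (Set.range v)).Nonempty) :
    (if p < q then n - q + 1 else n - q) ≤
      sdepth (upSet (Set.range u) \ upSet (Set.range v)) := by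
  refine HasStanleyDecompOn.le_sdepthOn ?_ hM
  rw [upSet_diff_eq_iUnion hpq hdom]
  refine .iUnion pairwise_disjoint_avoidSet fun j => hasStanleyDecompOn_avoidSet.mono ?_
  have := card_obstructions_le u v j
  have := j.isLt
  split_ifs <;> omega

end Layers

lemma msupp_mono {a b : Fin n → ℕ} (h : a ≤ b) : msupp a ⊆ msupp b := fun i hi => by
  simp only [msupp, mem_filter, mem_univ, true_and] at hi ⊢
  exact ((Nat.pos_of_ne_zero hi).trans_le (h i)).ne'

lemma msupp_nonempty {a : Fin n → ℕ} (h : a ≠ 0) : (msupp a).Nonempty := by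
  obtain ⟨i, hi⟩ := Function.ne_iff.mp h
  exact ⟨i, by simpa [msupp] using hi⟩

lemma IsRegSeqM.card_le {m : ℕ} {u : Fin m → Fin n → ℕ} (hu : IsRegSeqM u) : m ≤ n := by
  choose φ hφ using fun j => msupp_nonempty (hu.1 j)
  simpa using Fintype.card_le_of_injective φ fun j j' h => by_contra fun hne =>
    disjoint_left.mp (hu.2 j j' hne) (hφ j) (h ▸ hφ j')

lemma injective_of_le_of_disjoint_msupp {p q : ℕ} {u : Fin q → Fin n → ℕ}
    {v : Fin p → Fin n → ℕ} {σ : Fin p → Fin q} (hu : ∀ j, u j ≠ 0)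
    (hv : ∀ k k', k ≠ k' → Disjoint (msupp (v k)) (msupp (v k'))) (hσ : ∀ k, u (σ k) ≤ v k) :
    Injective σ := by
  intro k k' h
  by_contra hne
  obtain ⟨i, hi⟩ := msupp_nonempty (hu (σ k))
  exact disjoint_left.mp (hv k k' hne) (msupp_mono (hσ k) hi) (msupp_mono (hσ k') (h ▸ hi))

end MonomialCI

open MonomialCI

/-- the Stanley conjecture for quotients of monomial complete
intersections: `sdepth_S(J/I) ≥ depth_S(J/I)`, where
`depth_S(J/I) = n - q + 1` if `q > p` and `n - q` if `q = p`. -/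
theorem stmt_16 {n p q : ℕ} (hpq : p ≤ q)
    (u : Fin q → Fin n → ℕ) (v : Fin p → Fin n → ℕ)
    (hu : IsRegSeqM u) (hv : IsRegSeqM v)
    (hsub : upSet (Set.range v) ⊆ upSet (Set.range u))
    (hne : upSet (Set.range v) ≠ upSet (Set.range u)) :
    (if p < q then n - q + 1 else n - q) ≤
      sdepth (upSet (Set.range u) \ upSet (Set.range v)) := by
  have hM := Set.nonempty_of_ssubset (ssubset_of_subset_of_ne hsub hne)
  choose σ hσ using fun k => mem_upSet_range.mp (hsub ⟨v k, ⟨k, rfl⟩, le_rfl⟩)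
  obtain ⟨e, he⟩ := Equiv.Perm.exists_extending_pair σ (Fin.castLE hpq)
    (injective_of_le_of_disjoint_msupp hu.1 hv.2 hσ) (Fin.castLE_injective hpq)
  have hrange : Set.range (u ∘ e.symm) = Set.range u := e.symm.surjective.range_comp u
  rw [← hrange] at hM ⊢
  exact le_sdepth_upSet_diff hpq hu.card_le (fun k => by simpa [← he k] using hσ k) hM
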